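/- Every non-subgame-dominated strategy is subgame winning: if for no history h there is a strategy that weakly dominates σ_∃ from h, then for every history h such that some strategy σ' satisfies Out_h(σ') ⊆ L, we have Out_h(σ_∃) ⊆ L. -/

import Mathlib

open scoped Classical

universe u v

variable {I : Type u} {O : Type v}

/-- The finite (even) history consisting of the first `n` (input, output) pairs of a word.
A word in `(Σ_I · Σ_O)^ω` is modelled as `w : ℕ → I × O`, where round `n` consists of the
input letter `(w n).1` followed by the output letter `(w n).2`. -/
def wpref (w : ℕ → I × O) (n : ℕ) : List (I × O) := (List.range n).map w

/-- Outcomes of a controller strategy `σ : (Σ_I·Σ_O)^*·Σ_I → Σ_O`. -/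
def OutC (σ : List (I × O) → I → O) : Set (ℕ → I × O) :=
  {w | ∀ n, (w n).2 = σ (wpref w n) (w n).1}

/-- Outcomes of an environment strategy `τ : (Σ_I·Σ_O)^* → Σ_I`. -/
def OutE (τ : List (I × O) → I) : Set (ℕ → I × O) :=
  {w | ∀ n, (w n).1 = τ (wpref w n)}

/-- Input projection `π_I`. -/
def inputProj (w : ℕ → I × O) : ℕ → I := fun n => (w n).1

/-- `A` is an input assumption: closed under changing output letters. -/
def IsInputAssumption (A : Set (ℕ → I × O)) : Prop :=
  ∀ w w' : ℕ → I × O, inputProj w = inputProj w' → w ∈ A → w' ∈ A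

/-- Cylinder `h·(Σ_I·Σ_O)^ω` of an even history `h`. -/
def cylE (h : List (I × O)) : Set (ℕ → I × O) := {w | wpref w h.length = h}

/-- Cylinder of a general history: an even part plus possibly a pending input letter. -/
def cylH (h : List (I × O) × Option I) : Set (ℕ → I × O) :=
  {w | wpref w h.1.length = h.1 ∧ ∀ i, h.2 = some i → (w h.1.length).1 = i}

/-- A scenario is coherent: no history is a prefix of two words of `S`
that agree on the next input but disagree on the next output. -/
def Coherent (S : Set (ℕ → I × O)) : Prop :=
  ∀ w ∈ S, ∀ w' ∈ S, ∀ n, wpref w n = wpref w' n → (w n).1 = (w' n).1 → (w n).2 = (w' n).2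

/-- The strategy `[S → σ]`: follow a word of the scenario `S` extending the current
history if one exists, and otherwise play `σ`. -/
noncomputable def shiftStrat (S : Set (ℕ → I × O))
    (σ : List (I × O) → I → O) : List (I × O) → I → O := fun h i =>
  if hex : ∃ w, w ∈ S ∧ wpref w h.length = h ∧ (w h.length).1 = i
  then (hex.choose h.length).2
  else σ h i

/-- `EA(σ) = L ∪ ((Σ_I·Σ_O)^ω \ Out(σ))`. -/
def EA (L : Set (ℕ → I × O)) (σ : List (I × O) → I → O) : Set (ℕ → I × O) :=
  L ∪ (OutC σ)ᶜ

/-- The words doomed for `σ`: some even-length prefix extends to an outcome of `σ`,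
but no outcome of `σ` extending that prefix is in `L`. -/
def Doomed (L : Set (ℕ → I × O)) (σ : List (I × O) → I → O) : Set (ℕ → I × O) :=
  {w | ∃ k, (OutC σ ∩ cylE (wpref w k)).Nonempty ∧ OutC σ ∩ cylE (wpref w k) ∩ L = ∅}

/-- `EA⁻(σ) = EA(σ) \ Doomed(σ)`. -/
def EAminus (L : Set (ℕ → I × O)) (σ : List (I × O) → I → O) : Set (ℕ → I × O) :=
  EA L σ \ Doomed L σ

/-- `A` is sufficient for the specification `L` (for some controller strategy). -/
def Sufficient (L A : Set (ℕ → I × O)) : Prop :=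
  ∃ σ : List (I × O) → I → O, OutC σ ∩ A ⊆ L

/-- `A` is output-restrictive. -/
def OutputRestrictive (A : Set (ℕ → I × O)) : Prop :=
  ∃ (h : List (I × O)) (σ : List (I × O) → I → O),
    (A ∩ cylE h).Nonempty ∧ (OutC σ ∩ cylE h).Nonempty ∧ A ∩ OutC σ ∩ cylE h = ∅

/-- The even history of length `n` produced jointly by controller `σ` and environment `τ`. -/
def playH (σ : List (I × O) → I → O) (τ : List (I × O) → I) : ℕ → List (I × O)
  | 0 => []
  | n+1 =>
      let g := playH σ τ n
      g ++ [(τ g, σ g (τ g))]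

/-- The unique joint outcome `Out(σ, τ)`. -/
def play (σ : List (I × O) → I → O) (τ : List (I × O) → I) : ℕ → I × O := fun n =>
  let g := playH σ τ n
  (τ g, σ g (τ g))

/-- History construction when the controller follows `σ` against the fixed input word `u`. -/
def playIH (σ : List (I × O) → I → O) (u : ℕ → I) : ℕ → List (I × O)
  | 0 => []
  | n+1 =>
      let g := playIH σ u n
      g ++ [(u n, σ g (u n))]

/-- The unique outcome `Out(σ, u)` of `σ` against the input word `u`. -/
def playI (σ : List (I × O) → I → O) (u : ℕ → I) : ℕ → I × O := fun n =>
  (u n, σ (playIH σ u n) (u n))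

/-- Outcomes extending the history `h` and following `σ` afterwards, `Out_h(σ)`. -/
def OutFrom (σ : List (I × O) → I → O) (h : List (I × O) × Option I) :
    Set (ℕ → I × O) :=
  {w | wpref w h.1.length = h.1 ∧ (∀ i, h.2 = some i → (w h.1.length).1 = i) ∧
       ∀ n, h.1.length ≤ n → (w n).2 = σ (wpref w n) (w n).1}

/-- Even histories extending the finite history `b`, following `σ` and `τ`. -/
def extH (σ : List (I × O) → I → O) (τ : List (I × O) → I)
    (b : List (I × O)) : ℕ → List (I × O)
  | 0 => b
  | n+1 =>
      let g := extH σ τ b n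
      g ++ [(τ g, σ g (τ g))]

/-- The unique word extending `b` and following `σ` and `τ` afterwards. -/
def extPlay (σ : List (I × O) → I → O) (τ : List (I × O) → I)
    (b : List (I × O)) : ℕ → I × O := fun n =>
  if hn : n < b.length then b.get ⟨n, hn⟩
  else
    let g := extH σ τ b (n - b.length)
    (τ g, σ g (τ g))

/-- The even history obtained from the general history `h`, letting `σ` answer a
pending input letter if there is one. -/
def histBase (σ : List (I × O) → I → O) (h : List (I × O) × Option I) :
    List (I × O) :=
  match h.2 with
  | none => h.1
  | some i => h.1 ++ [(i, σ h.1 i)]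

/-- `Out_h(σ, τ)`: the unique word extending `h`, following `σ` and `τ` afterwards. -/
def playFrom (σ : List (I × O) → I → O) (τ : List (I × O) → I)
    (h : List (I × O) × Option I) : ℕ → I × O :=
  extPlay σ τ (histBase σ h)

/-- `σ` is strongly winning for `L`. -/
def StronglyWinning (L : Set (ℕ → I × O)) (σ : List (I × O) → I → O) : Prop :=
  ∀ h : List (I × O) × Option I,
    (∃ σ' : List (I × O) → I → O, (OutC σ' ∩ cylH h).Nonempty ∧ OutC σ' ∩ cylH h ⊆ L) →
    OutC σ ∩ cylH h ⊆ L

/-- `σ` is subgame winning for `L`. -/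
def SubgameWinning (L : Set (ℕ → I × O)) (σ : List (I × O) → I → O) : Prop :=
  ∀ h : List (I × O) × Option I,
    (∃ σ' : List (I × O) → I → O, OutFrom σ' h ⊆ L) → OutFrom σ h ⊆ L

/-! From a history `h`, the outcomes of `σ` are exactly the plays `Out_h(σ, τ)`: an outcome `w`
is the play against the environment strategy that reads its next input off `w`. So a strategy
`σ'` winning from `h` very weakly dominates `σ` from `h`, and as this domination cannot be
strict, `σ` wins against every `τ` from `h` too. -/

lemma wpref_length (w : ℕ → I × O) (n : ℕ) : (wpref w n).length = n := by
  simp [wpref]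

lemma wpref_succ (w : ℕ → I × O) (n : ℕ) : wpref w (n + 1) = wpref w n ++ [w n] := by
  simp [wpref, List.range_succ]

lemma wpref_take (w : ℕ → I × O) {m n : ℕ} (hmn : m ≤ n) :
    (wpref w n).take m = wpref w m := by
  rw [wpref, ← List.map_take, List.take_range, Nat.min_eq_left hmn, wpref]

lemma wpref_succ_eq_append_singleton_iff (w : ℕ → I × O) (g : List (I × O)) (a : I × O) :
    wpref w (g.length + 1) = g ++ [a] ↔ wpref w g.length = g ∧ w g.length = a := by
  rw [wpref_succ, List.append_eq_append_iff_of_size_eq_left (wpref_length w _),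
    List.singleton_inj]

lemma eq_of_wpref_eq_of_forall_le {w w' : ℕ → I × O} {k : ℕ} (F : List (I × O) → I × O)
    (hk : wpref w k = wpref w' k) (hw : ∀ n, k ≤ n → w n = F (wpref w n))
    (hw' : ∀ n, k ≤ n → w' n = F (wpref w' n)) : w = w' := by
  have hpref : ∀ n, wpref w n = wpref w' n := by
    intro n
    induction n with
    | zero => rfl
    | succ n ih =>
      rcases lt_or_ge n k with hnk | hkn
      · rw [← wpref_take w hnk, ← wpref_take w' hnk, hk]
      · rw [wpref_succ, wpref_succ, ih, hw n hkn, hw' n hkn, ih]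
  funext n
  have := hpref (n + 1)
  rwa [wpref_succ, wpref_succ, hpref n, List.append_cancel_left_eq, List.singleton_inj] at this

section Plays

variable (σ : List (I × O) → I → O) (τ : List (I × O) → I)

lemma wpref_extPlay_length (b : List (I × O)) : wpref (extPlay σ τ b) b.length = b := by
  apply List.ext_getElem (wpref_length _ _)
  intro k _ hk
  simp [wpref, extPlay, hk]

lemma wpref_extPlay_length_add (b : List (I × O)) (n : ℕ) :
    wpref (extPlay σ τ b) (b.length + n) = extH σ τ b n := by
  induction n with
  | zero => exact wpref_extPlay_length σ τ b
  | succ n ih =>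
    rw [← Nat.add_assoc, wpref_succ, ih]
    simp [extH, extPlay]

lemma extPlay_of_length_le (b : List (I × O)) {n : ℕ} (hn : b.length ≤ n) :
    extPlay σ τ b n = let g := wpref (extPlay σ τ b) n; (τ g, σ g (τ g)) := by
  obtain ⟨m, rfl⟩ := Nat.exists_eq_add_of_le hn
  rw [wpref_extPlay_length_add]
  simp [extPlay]

lemma mem_OutFrom_iff_histBase (w : ℕ → I × O) (h : List (I × O) × Option I) :
    w ∈ OutFrom σ h ↔ wpref w (histBase σ h).length = histBase σ h ∧
      ∀ n, (histBase σ h).length ≤ n → (w n).2 = σ (wpref w n) (w n).1 := by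
  rcases h with ⟨g, _ | i⟩
  · simp [OutFrom, histBase]
  · simp only [OutFrom, histBase, List.length_append, List.length_singleton, Set.mem_ofPred_eq,
      Option.some.injEq, forall_eq', wpref_succ_eq_append_singleton_iff]
    constructor
    · rintro ⟨hg, hi, hout⟩
      refine ⟨⟨hg, Prod.ext hi ?_⟩, fun n hn => hout n (by omega)⟩
      rw [hout _ le_rfl, hg, hi]
    · rintro ⟨⟨hg, hgi⟩, hout⟩
      refine ⟨hg, by rw [hgi], fun n hn => ?_⟩
      rcases hn.eq_or_lt with rfl | hlt
      · rw [hgi, hg]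
      · exact hout n hlt

lemma playFrom_mem_OutFrom (h : List (I × O) × Option I) : playFrom σ τ h ∈ OutFrom σ h := by
  rw [mem_OutFrom_iff_histBase]
  refine ⟨wpref_extPlay_length σ τ _, fun n hn => ?_⟩
  rw [playFrom, extPlay_of_length_le σ τ _ hn]

end Plays

lemma playFrom_eq_of_mem_OutFrom {σ : List (I × O) → I → O} {h : List (I × O) × Option I}
    {w : ℕ → I × O} (hw : w ∈ OutFrom σ h) :
    playFrom σ (fun g => (w g.length).1) h = w := by
  rw [mem_OutFrom_iff_histBase] at hw
  obtain ⟨hbase, hout⟩ := hw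
  refine eq_of_wpref_eq_of_forall_le (k := (histBase σ h).length)
    (fun g => ((w g.length).1, σ g (w g.length).1)) ?_ ?_ ?_
  · rw [playFrom, wpref_extPlay_length, hbase]
  · intro n hn
    rw [playFrom, extPlay_of_length_le _ _ _ hn]
  · intro n hn
    rw [wpref_length]
    exact Prod.ext rfl (hout n hn)

lemma OutFrom_subset_iff (L : Set (ℕ → I × O)) (σ : List (I × O) → I → O)
    (h : List (I × O) × Option I) : OutFrom σ h ⊆ L ↔ ∀ τ, playFrom σ τ h ∈ L := by
  refine ⟨fun hL τ => hL (playFrom_mem_OutFrom σ τ h), fun hL w hw => ?_⟩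
  rw [← playFrom_eq_of_mem_OutFrom hw]
  exact hL _

/-- a non-subgame-dominated strategy is subgame winning. -/
theorem nonSubgameDominated_subgameWinning
    (L : Set (ℕ → I × O)) (σ : List (I × O) → I → O)
    (hnd : ∀ (h : List (I × O) × Option I) (σ' : List (I × O) → I → O),
      ¬ ((∀ τ : List (I × O) → I, playFrom σ τ h ∈ L → playFrom σ' τ h ∈ L) ∧
         ¬ (∀ τ : List (I × O) → I, playFrom σ' τ h ∈ L → playFrom σ τ h ∈ L))) :
    SubgameWinning L σ := by
  rintro h ⟨σ', hσ'⟩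
  rw [OutFrom_subset_iff] at hσ' ⊢
  by_contra hσ
  exact hnd h σ' ⟨fun τ _ => hσ' τ, fun hback => hσ fun τ => hback τ (hσ' τ)⟩
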